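/- arXiv:2511.06412 — 5 statements merged into one kernel-verified Lean document; each statement's English description precedes it below -/
import Mathlib

section
/- Let T > 0, let Ω ⊆ ℂⁿ be a bounded open set, and for each t ∈ (0,T) let κ_t be a Borel measure on Ω. Assume: (i) for every compact set J ⊂ (0,T) and every open set U relatively compact in Ω one has sup_{t ∈ J} κ_t(U) < ∞; (ii) for every continuous compactly supported function χ : (0,T) × Ω → ℝ, the map t ↦ ∫_Ω χ(t,·) dκ_t is continuous on (0,T). Then for every Borel set E ⊆ (0,T) × Ω, the map t ↦ κ_t(E_t) is Borel measurable on (0,T), where E_t := {z ∈ Ω : (t,z) ∈ E}. -/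
/-!
For a relatively compact open `V ⋐ Ω`, `κ t V` is the limit of `∫ f_j dκ t` for continuous
`f_j → 1_V` bounded by `1_V` (dominated convergence). Multiplying `f_j` by a time cutoff equal
to `1` near `t₀` turns it into an admissible space-time test function, so these integrals are
continuous in `t` and `t ↦ κ t V` is Borel. A Dynkin-system argument over the rectangles
`A ×ˢ V`, with `V` open, extends this to `t ↦ κ t (E_t ∩ W)` for every Borel `E` and every
relatively compact open `W ⋐ Ω`; the finiteness of `κ t W` is what lets the argument pass to
complements. Exhausting `Ω` by an increasing sequence of such `W` gives the claim.
-/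

open MeasureTheory MeasurableSpace Set Filter Topology
open scoped ENNReal NNReal

theorem IsOpen.exists_continuous_tendsto_indicator {X : Type*} [PseudoMetricSpace X]
    {U : Set X} (hU : IsOpen U) :
    ∃ f : ℕ → X → ℝ, (∀ j, Continuous (f j)) ∧ (∀ j x, ‖f j x‖ ≤ U.indicator 1 x) ∧
      ∀ x, Tendsto (f · x) atTop (𝓝 (U.indicator 1 x)) := by
  have hδ : ∀ j : ℕ, (0 : ℝ) < 1 / (j + 1) := fun j => Nat.one_div_pos_of_nat
  have hlim : ∀ x, Tendsto (fun j => (thickenedIndicator (hδ j) Uᶜ x : ℝ)) atTop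
      (𝓝 (1 - U.indicator 1 x)) := by
    intro x
    have h := tendsto_pi_nhds.1 (thickenedIndicator_tendsto_indicator_closure hδ
      tendsto_one_div_add_atTop_nhds_zero_nat Uᶜ) x
    rw [hU.isClosed_compl.closure_eq] at h
    have hval :
        ((Uᶜ.indicator (fun _ => (1 : ℝ≥0)) x : ℝ≥0) : ℝ) = 1 - U.indicator 1 x := by
      by_cases hx : x ∈ U
      · rw [indicator_of_mem hx, indicator_of_notMem (notMem_compl_iff.2 hx)]; simp
      · rw [indicator_of_notMem hx, indicator_of_mem (mem_compl hx)]; simp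
    exact hval ▸ (NNReal.continuous_coe.tendsto _).comp h
  refine ⟨fun j x => 1 - thickenedIndicator (hδ j) Uᶜ x, fun j => by fun_prop,
    fun j x => ?_, fun x => by simpa using (hlim x).const_sub 1⟩
  dsimp only
  by_cases hx : x ∈ U
  · have h_le_one := thickenedIndicator_le_one (hδ j) Uᶜ x
    rw [indicator_of_mem hx, Pi.one_apply, Real.norm_of_nonneg (by simpa using h_le_one)]
    simp
  · rw [thickenedIndicator_one (hδ j) Uᶜ (mem_compl hx), indicator_of_notMem hx]
    simp

theorem IsOpen.measurable_measure_of_measurable_integral {α X : Type*} [MeasurableSpace α]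
    [PseudoMetricSpace X] [MeasurableSpace X] [OpensMeasurableSpace X] {κ : α → Measure X}
    {U : Set X} (hU : IsOpen U) (hfin : ∀ a, κ a U ≠ ∞)
    (hκ : ∀ f : X → ℝ, Continuous f → tsupport f ⊆ closure U →
      Measurable fun a => ∫ x, f x ∂κ a) :
    Measurable fun a => κ a U := by
  obtain ⟨f, hf_cont, hf_le, hf_lim⟩ := hU.exists_continuous_tendsto_indicator
  have hf_supp : ∀ j, tsupport (f j) ⊆ closure U := fun j => closure_mono fun x hx => by
    by_contra hxU
    exact hx (norm_le_zero_iff.1 ((hf_le j x).trans_eq (indicator_of_notMem hxU _)))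
  have h_tendsto : ∀ a, Tendsto (fun j => ∫ x, f j x ∂κ a) atTop (𝓝 ((κ a).real U)) := by
    intro a
    rw [← integral_indicator_one hU.measurableSet]
    refine tendsto_integral_of_dominated_convergence _
      (fun j => (hf_cont j).aestronglyMeasurable) ?_ (fun j => ae_of_all _ (hf_le j))
      (ae_of_all _ hf_lim)
    exact (integrable_indicator_iff hU.measurableSet).2 (integrableOn_const (hfin a))
  have h_real : Measurable fun a => (κ a).real U :=
    measurable_of_tendsto_metrizable (fun j => hκ _ (hf_cont j) (hf_supp j))
      (tendsto_pi_nhds.2 h_tendsto)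
  simpa only [ofReal_measureReal (hfin _)] using h_real.ennreal_ofReal

theorem tsupport_mul_comp_fst_snd_subset {Y X : Type*} [TopologicalSpace Y]
    [TopologicalSpace X] (φ : Y → ℝ) (f : X → ℝ) :
    tsupport (fun p : Y × X => φ p.1 * f p.2) ⊆ tsupport φ ×ˢ tsupport f :=
  closure_minimal (fun _ hp => ⟨subset_tsupport _ (left_ne_zero_of_mul hp),
    subset_tsupport _ (right_ne_zero_of_mul hp)⟩)
    ((isClosed_tsupport _).prod (isClosed_tsupport _))

theorem continuousOn_integral_of_continuousOn_integral_prod {Y X : Type*} [TopologicalSpace Y]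
    [LocallyCompactSpace Y] [R1Space Y] [TopologicalSpace X] [MeasurableSpace X]
    {κ : Y → Measure X} {s : Set Y} (hs : IsOpen s) {Ω : Set X}
    (hκ : ∀ χ : Y × X → ℝ, Continuous χ → HasCompactSupport χ → tsupport χ ⊆ s ×ˢ Ω →
      ContinuousOn (fun t => ∫ z, χ (t, z) ∂κ t) s)
    {f : X → ℝ} (hf : Continuous f) (hfc : HasCompactSupport f) (hfΩ : tsupport f ⊆ Ω) :
    ContinuousOn (fun t => ∫ z, f z ∂κ t) s := by
  intro t₀ ht₀
  obtain ⟨K, hK_nhds, hKs, hK⟩ := local_compact_nhds (hs.mem_nhds ht₀)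
  obtain ⟨φ, hφ_one, hφ_cpt, hφs, -⟩ :=
    exists_continuousMap_one_of_isCompact_subset_isOpen hK hs hKs
  have hχ_supp := tsupport_mul_comp_fst_snd_subset φ f
  have hχ := hκ _ (by fun_prop)
    ((hφ_cpt.prod hfc).of_isClosed_subset (isClosed_tsupport _) hχ_supp)
    (hχ_supp.trans (prod_mono hφs hfΩ))
  refine ((hχ.continuousAt (hs.mem_nhds ht₀)).congr ?_).continuousWithinAt
  filter_upwards [hK_nhds] with t ht
  simp [hφ_one ht]

theorem measurableSpace_prod_eq_generateFrom_measurableSet_isOpen {α β : Type*}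
    [MeasurableSpace α] [TopologicalSpace β] [MeasurableSpace β] [BorelSpace β] :
    (Prod.instMeasurableSpace : MeasurableSpace (α × β)) =
      generateFrom (image2 (· ×ˢ ·) {A : Set α | MeasurableSet A} {V : Set β | IsOpen V}) :=
  calc (Prod.instMeasurableSpace : MeasurableSpace (α × β))
      = @Prod.instMeasurableSpace α β (generateFrom {A | MeasurableSet A}) (borel β) := by
        rw [generateFrom_measurableSet, ← BorelSpace.measurable_eq]
    _ = _ := generateFrom_prod_eq isCountablySpanning_measurableSet
        ⟨fun _ => univ, fun _ => isOpen_univ, iUnion_const univ⟩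

theorem measurable_measure_prodMk_left_inter {α β : Type*} [MeasurableSpace α]
    [TopologicalSpace β] [MeasurableSpace β] [BorelSpace β] {κ : α → Measure β} {U : Set β}
    (hU : MeasurableSet U) (hfin : ∀ a, κ a U ≠ ∞)
    (hκ : ∀ V, IsOpen V → Measurable fun a => κ a (V ∩ U)) {E : Set (α × β)}
    (hE : MeasurableSet E) :
    Measurable fun a => κ a (Prod.mk a ⁻¹' E ∩ U) := by
  classical
  induction E, hE using induction_on_inter
    (measurableSpace_prod_eq_generateFrom_measurableSet_isOpen (α := α) (β := β))
    (isPiSystem_measurableSet.prod isPiSystem_isOpen) with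
  | empty => simp
  | basic _ hE =>
    obtain ⟨A, hA, V, hV, rfl⟩ := hE
    convert (hκ V hV).indicator hA using 2 with a
    by_cases ha : a ∈ A <;> simp [ha]
  | compl E hE hE_meas =>
    have h_diff (a : α) :
        κ a (Prod.mk a ⁻¹' Eᶜ ∩ U) = κ a U - κ a (Prod.mk a ⁻¹' E ∩ U) := by
      rw [preimage_compl, ← sdiff_eq_compl_inter, ← sdiff_inter_self_eq_sdiff,
        measure_sdiff inter_subset_right
          ((measurable_prodMk_left hE).inter hU).nullMeasurableSet
          (ne_top_of_le_ne_top (hfin a) (measure_mono inter_subset_right))]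
    simp_rw [h_diff]
    exact (by simpa using hκ univ isOpen_univ : Measurable fun a => κ a U).sub hE_meas
  | iUnion E hE_disj hE hE_meas =>
    have h_sum (a : α) :
        κ a (Prod.mk a ⁻¹' (⋃ i, E i) ∩ U) = ∑' i, κ a (Prod.mk a ⁻¹' E i ∩ U) := by
      rw [preimage_iUnion, iUnion_inter, measure_iUnion]
      · exact hE_disj.mono fun i j h => (h.preimage _).mono inter_subset_left inter_subset_left
      · exact fun i => (measurable_prodMk_left (hE i)).inter hU
    simp_rw [h_sum]
    exact Measurable.tsum hE_meas

theorem IsOpen.exists_monotone_iUnion_isCompact_closure {X : Type*} [TopologicalSpace X]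
    [T2Space X] [LocallyCompactSpace X] [SecondCountableTopology X] {Ω : Set X}
    (hΩ : IsOpen Ω) :
    ∃ W : ℕ → Set X, Monotone W ∧
      (∀ k, IsOpen (W k) ∧ IsCompact (closure (W k)) ∧ closure (W k) ⊆ Ω) ∧
      ⋃ k, W k = Ω := by
  have : LocallyCompactSpace Ω := hΩ.locallyCompactSpace
  let K : CompactExhaustion Ω := default
  refine ⟨fun k => (↑) '' interior (K (k + 1)), fun k l hkl => ?_, fun k => ?_, ?_⟩
  · exact image_mono (interior_mono (K.subset (by omega)))
  · have hK : IsCompact (((↑) : Ω → X) '' K (k + 1)) :=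
      (K.isCompact _).image continuous_subtype_val
    have hcl : closure (((↑) : Ω → X) '' interior (K (k + 1))) ⊆ (↑) '' K (k + 1) :=
      closure_minimal (image_mono interior_subset) hK.isClosed
    exact ⟨hΩ.isOpenMap_subtype_val _ isOpen_interior,
      hK.of_isClosed_subset isClosed_closure hcl, hcl.trans (Subtype.coe_image_subset _ _)⟩
  · refine (iUnion_subset fun k => Subtype.coe_image_subset _ _).antisymm fun x hx => ?_
    obtain ⟨k, hk⟩ := K.exists_mem ⟨x, hx⟩
    exact mem_iUnion.2 ⟨k, ⟨x, hx⟩, K.subset_interior_succ k hk, rfl⟩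

theorem stmt_0_general {n : ℕ} (T : ℝ)
    (Ω : Set ((Fin n → ℂ))) (hΩ_open : IsOpen Ω)
    (κ : ℝ → Measure ((Fin n → ℂ)))
    (h_mass : ∀ J : Set ℝ, IsCompact J → J ⊆ Ioo 0 T →
      ∀ U : Set ((Fin n → ℂ)), IsOpen U → IsCompact (closure U) →
        closure U ⊆ Ω → (⨆ t ∈ J, κ t U) < ⊤)
    (h_cont : ∀ χ : ℝ × (Fin n → ℂ) → ℝ, Continuous χ →
      HasCompactSupport χ → tsupport χ ⊆ Ioo 0 T ×ˢ Ω →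
      ContinuousOn (fun t => ∫ z, χ (t, z) ∂(κ t)) (Ioo 0 T))
    (E : Set (ℝ × (Fin n → ℂ))) (hE : MeasurableSet E)
    (hE_sub : E ⊆ Ioo 0 T ×ˢ Ω) :
    Measurable (fun t : Ioo 0 T => κ t {z | ((t : ℝ), z) ∈ E}) := by
  obtain ⟨W, hW_mono, hW, hW_union⟩ := hΩ_open.exists_monotone_iUnion_isCompact_closure
  have h_fin {V} (hV : IsOpen V) (hVc : IsCompact (closure V)) (hVΩ : closure V ⊆ Ω)
      (t : Ioo 0 T) : κ t V ≠ ∞ := by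
    simpa using (h_mass {(t : ℝ)} isCompact_singleton (singleton_subset_iff.2 t.2) V hV hVc
      hVΩ).ne
  have h_meas {V} (hV : IsOpen V) (hVc : IsCompact (closure V)) (hVΩ : closure V ⊆ Ω) :
      Measurable fun t : Ioo 0 T => κ t V :=
    hV.measurable_measure_of_measurable_integral (h_fin hV hVc hVΩ) fun f hf hfV =>
      (continuousOn_integral_of_continuousOn_integral_prod isOpen_Ioo h_cont hf
        (hVc.of_isClosed_subset (isClosed_tsupport f) hfV)
        (hfV.trans hVΩ)).domRestrict.measurable
  have h_meas_inter (k : ℕ) :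
      Measurable fun t : Ioo 0 T => κ t ({z | ((t : ℝ), z) ∈ E} ∩ W k) := by
    obtain ⟨hWo, hWc, hWΩ⟩ := hW k
    have hcl {V} : closure (V ∩ W k) ⊆ closure (W k) := closure_mono inter_subset_right
    exact measurable_measure_prodMk_left_inter (κ := fun t : Ioo 0 T => κ t) hWo.measurableSet
      (h_fin hWo hWc hWΩ) (fun V hV => h_meas (hV.inter hWo)
        (hWc.of_isClosed_subset isClosed_closure hcl) (hcl.trans hWΩ))
      ((measurable_subtype_coe.prodMap measurable_id) hE)
  have h_iSup (t : Ioo 0 T) :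
      κ t {z | ((t : ℝ), z) ∈ E} = ⨆ k, κ t ({z | ((t : ℝ), z) ∈ E} ∩ W k) := by
    have h_fiber : {z | ((t : ℝ), z) ∈ E} ⊆ Ω := fun z hz => (hE_sub hz).2
    rw [← (monotone_const.inter hW_mono).measure_iUnion, ← inter_iUnion, hW_union,
      inter_eq_left.2 h_fiber]
  simp_rw [h_iSup]
  exact .iSup h_meas_inter

/-- Lemma 2.2 of the paper, measure-theoretic content.
Let `T > 0`, `Ω ⊆ ℂⁿ` bounded open, and for each `t ∈ (0,T)` let `κ t` be a Borel
measure on `Ω`. Assume (i) uniform local mass bounds on compact time sets and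
relatively compact open subsets of `Ω`, and (ii) continuity of
`t ↦ ∫ χ(t,·) dκ t` for every continuous compactly supported test function `χ`
on `(0,T) × Ω`. Then for every Borel set `E ⊆ (0,T) × Ω`, the fiber-mass map
`t ↦ κ t (E_t)` is Borel measurable on `(0,T)`. -/
theorem stmt_0 {n : ℕ} (T : ℝ) (hT : 0 < T)
    (Ω : Set ((Fin n → ℂ))) (hΩ_open : IsOpen Ω)
    (hΩ_bdd : Bornology.IsBounded Ω)
    (κ : ℝ → Measure ((Fin n → ℂ)))
    (h_mass : ∀ J : Set ℝ, IsCompact J → J ⊆ Ioo 0 T →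
      ∀ U : Set ((Fin n → ℂ)), IsOpen U → IsCompact (closure U) →
        closure U ⊆ Ω → (⨆ t ∈ J, κ t U) < ⊤)
    (h_cont : ∀ χ : ℝ × (Fin n → ℂ) → ℝ, Continuous χ →
      HasCompactSupport χ → tsupport χ ⊆ Ioo 0 T ×ˢ Ω →
      ContinuousOn (fun t => ∫ z, χ (t, z) ∂(κ t)) (Ioo 0 T))
    (E : Set (ℝ × (Fin n → ℂ))) (hE : MeasurableSet E)
    (hE_sub : E ⊆ Ioo 0 T ×ˢ Ω) :
    Measurable (fun t : Ioo 0 T => κ t {z | ((t : ℝ), z) ∈ E}) :=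
  stmt_0_general T Ω hΩ_open κ h_mass h_cont E hE hE_sub
end

section
/- Let C > 0, ε > 0, and 0 < δ ≤ ε/(6C). Let t ∈ ℝ and let u, v be real-valued functions defined on an open interval J containing [t−δ, t] such that both u and v are C-semiconcave on J, and such that u is differentiable on J with |u'(s₁) − u'(s₂)| ≤ C|s₁ − s₂| for all s₁, s₂ ∈ J. If (u(t) − u(t−δ))/δ > (v(t) − v(t−δ))/δ + ε, then u'(t) > ∂⁻v(t) + ε/2, where ∂⁻v(t) is the left derivative of v at t (which exists by semiconcavity). -/
/-! By the mean value theorem and the Lipschitz bound on `u'`, `u'(t)` is at least the secant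
slope of `u` over `[t - δ, t]` minus `Cδ`. Since `v - C s²` is concave, its left derivative at `t`
exists and is at most its secant slope, so `∂⁻v(t)` is at most the secant slope of `v` plus `Cδ`.
The hypothesis on the slopes and `2Cδ ≤ ε/3` then give the claim. -/

open Set Filter Topology

theorem HasDerivWithinAt.tendsto_slope_zero_left {f : ℝ → ℝ} {f' x : ℝ}
    (hf : HasDerivWithinAt f f' (Iio x) x) :
    Tendsto (fun h => (f (x + h) - f x) / h) (𝓝[<] 0) (𝓝 f') := by
  have hslope := (hasDerivWithinAt_iff_tendsto_slope' self_notMem_Iio).mp hf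
  rw [← add_zero x, ← Filter.map_add_left_nhdsLT, tendsto_map'_iff] at hslope
  refine hslope.congr fun h => ?_
  simp [slope_def_field]

theorem ConcaveOn.exists_hasDerivWithinAt_Iio_of_sub_sq {J : Set ℝ} {v : ℝ → ℝ} {C t : ℝ}
    (hv : ConcaveOn ℝ J (fun s => v s - C * s ^ 2)) (ht : t ∈ interior J) :
    ∃ d, HasDerivWithinAt v d (Iio t) t := by
  have hg := (hv.neg.hasDerivWithinAt_leftDeriv_of_mem_interior ht).neg
  refine ⟨_, (hg.add ((hasDerivAt_pow 2 t).const_mul C).hasDerivWithinAt).congr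
    (fun s _ => ?_) ?_⟩ <;> simp

theorem ConcaveOn.le_slope_add_of_sub_sq {J : Set ℝ} {v : ℝ → ℝ} {C x y d : ℝ}
    (hv : ConcaveOn ℝ J (fun s => v s - C * s ^ 2)) (hx : x ∈ J) (hy : y ∈ J) (hxy : x < y)
    (hd : HasDerivWithinAt v d (Iio y) y) : d ≤ slope v x y + C * (y - x) := by
  have h := hv.le_slope_of_hasDerivWithinAt_Iio hx hy hxy
    (hd.sub ((hasDerivAt_pow 2 y).const_mul C).hasDerivWithinAt)
  have hslope : slope (fun s => v s - C * s ^ 2) x y = slope v x y - C * (x + y) := by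
    simp only [slope_def_field]
    field_simp [sub_ne_zero.mpr hxy.ne']
    ring
  rw [hslope] at h
  simp only [Nat.cast_ofNat, Nat.add_one_sub_one, pow_one] at h
  linarith

theorem slope_le_add_of_abs_deriv_sub_le {f f' : ℝ → ℝ} {C x y : ℝ} (hC : 0 ≤ C) (hxy : x < y)
    (hf : ∀ s ∈ Icc x y, HasDerivAt f (f' s) s)
    (hlip : ∀ s ∈ Ioo x y, |f' y - f' s| ≤ C * |y - s|) :
    slope f x y ≤ f' y + C * (y - x) := by
  obtain ⟨ξ, hξ, hξ_eq⟩ := exists_hasDerivAt_eq_slope f f' hxy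
    (fun s hs => (hf s hs).continuousAt.continuousWithinAt)
    (fun s hs => hf s (Ioo_subset_Icc_self hs))
  have hdist : |y - ξ| ≤ y - x := by rw [abs_of_pos (sub_pos.mpr hξ.2)]; linarith [hξ.1]
  calc slope f x y = f' ξ := by rw [hξ_eq, slope_def_field]
    _ ≤ f' y + |f' y - f' ξ| := by linarith [neg_abs_le (f' y - f' ξ)]
    _ ≤ f' y + C * (y - x) := by
      gcongr
      exact (hlip ξ hξ).trans (mul_le_mul_of_nonneg_left hdist hC)

theorem stmt_4_general (C ε δ t : ℝ) (hC : 0 < C) (hε : 0 < ε) (hδ : 0 < δ)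
    (hδε : δ ≤ ε / (6 * C)) (J : Set ℝ) (hJ_open : IsOpen J)
    (hJ : Icc (t - δ) t ⊆ J)
    (u v : ℝ → ℝ) (u' : ℝ → ℝ)
    (hv_sc : ConcaveOn ℝ J (fun s => v s - C * s ^ 2))
    (hu_diff : ∀ s ∈ J, HasDerivAt u (u' s) s)
    (hu_lip : ∀ s₁ ∈ J, ∀ s₂ ∈ J, |u' s₁ - u' s₂| ≤ C * |s₁ - s₂|)
    (hquot : (u t - u (t - δ)) / δ > (v t - v (t - δ)) / δ + ε) :
    ∃ dm : ℝ,
      Tendsto (fun h : ℝ => (v (t + h) - v t) / h) (𝓝[<] 0) (𝓝 dm) ∧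
      u' t > dm + ε / 2 := by
  have htJ : t ∈ J := hJ ⟨by linarith, le_rfl⟩
  have hlt : t - δ < t := by linarith
  obtain ⟨dm, hdm⟩ :=
    hv_sc.exists_hasDerivWithinAt_Iio_of_sub_sq (hJ_open.interior_eq.symm ▸ htJ)
  refine ⟨dm, hdm.tendsto_slope_zero_left, ?_⟩
  have hv_slope := hv_sc.le_slope_add_of_sub_sq (hJ ⟨le_rfl, hlt.le⟩) htJ hlt hdm
  have hu_slope := slope_le_add_of_abs_deriv_sub_le hC.le hlt (fun s hs => hu_diff s (hJ hs))
    (fun s hs => hu_lip t htJ s (hJ (Ioo_subset_Icc_self hs)))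
  simp only [slope_def_field, sub_sub_cancel] at hv_slope hu_slope
  have hCδ : C * δ ≤ ε / 6 := by
    rw [le_div_iff₀ (by positivity)] at hδε
    linarith
  linarith

/-- the key real-variable step, inequalities (3.3)–(3.5), in
the proof of the paper's Lemma 3.3. Let `C > 0`, `ε > 0`, `0 < δ ≤ ε/(6C)`,
let `J` be an open interval containing `[t-δ, t]`, and let `u, v` be
`C`-semiconcave on `J` (i.e. `s ↦ u s - C s²` and `s ↦ v s - C s²` are concave
on `J`), with `u` differentiable on `J` and `|u'(s₁) - u'(s₂)| ≤ C |s₁ - s₂|`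
on `J`. If `(u t - u (t-δ))/δ > (v t - v (t-δ))/δ + ε`, then the left
derivative `∂⁻v(t)` exists and `u'(t) > ∂⁻v(t) + ε/2`. -/
theorem stmt_4 (C ε δ t : ℝ) (hC : 0 < C) (hε : 0 < ε) (hδ : 0 < δ)
    (hδε : δ ≤ ε / (6 * C)) (J : Set ℝ) (hJ_open : IsOpen J)
    (hJ_conv : Convex ℝ J) (hJ : Icc (t - δ) t ⊆ J)
    (u v : ℝ → ℝ) (u' : ℝ → ℝ)
    (hu_sc : ConcaveOn ℝ J (fun s => u s - C * s ^ 2))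
    (hv_sc : ConcaveOn ℝ J (fun s => v s - C * s ^ 2))
    (hu_diff : ∀ s ∈ J, HasDerivAt u (u' s) s)
    (hu_lip : ∀ s₁ ∈ J, ∀ s₂ ∈ J, |u' s₁ - u' s₂| ≤ C * |s₁ - s₂|)
    (hquot : (u t - u (t - δ)) / δ > (v t - v (t - δ)) / δ + ε) :
    ∃ dm : ℝ,
      Tendsto (fun h : ℝ => (v (t + h) - v t) / h) (𝓝[<] 0) (𝓝 dm) ∧
      u' t > dm + ε / 2 :=
  stmt_4_general C ε δ t hC hε hδ hδε J hJ_open hJ u v u' hv_sc hu_diff hu_lip hquot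
end

section
/- Let n > 0, and let 0 < L ≤ κ be real numbers. Let F : ℝ → ℝ be nondecreasing and satisfy L(b − a) ≤ F(b) − F(a) ≤ κ(b − a) for all real a ≤ b. Let ψ ≤ 0 and ψ_∞ ≤ 0 be real numbers, and define W : (0,∞) → ℝ by W(t) = e^{−Lt}ψ + (1 − e^{−κt})ψ_∞ + Φ(t)e^{−Lt}. Then W is differentiable on (0,∞) and for every t > 0: W'(t) + F(W(t)) ≤ F(ψ_∞) + n·log(1 − e^{−Lt}). -/
/-!
Write `u = e^{-Lt}`, `v = e^{-κt}`. The correction `Φ` is chosen so that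
`Φ'(t) e^{-Lt} = n log(1 - e^{-Lt})`, hence `W' = -L u (ψ + Φ) + κ v ψ∞ + n log(1 - u)`,
while `W = ψ∞ + u (ψ + Φ) - v ψ∞`.
Since `Φ ≤ 0`, both `u (ψ + Φ)` and `v ψ∞` are nonpositive, and the two-sided bound on the
increments of `F` (slope `L` below `ψ∞`, slope `κ` above it) gives
`F(W) ≤ F(ψ∞) + L u (ψ + Φ) - κ v ψ∞`, which is exactly what is needed.
-/

open Real

/-- The correction `Φ` of the barrier `W`. -/
noncomputable def barrierCorrection (n L t : ℝ) : ℝ :=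
  (n / L) * (exp (L * t) - 1) * log (exp (L * t) - 1) - n * t * exp (L * t)

lemma log_exp_sub_one {x : ℝ} (hx : x ≠ 0) : log (exp x - 1) = x + log (1 - exp (-x)) := by
  have h1 : 1 - exp (-x) ≠ 0 := by
    rw [sub_ne_zero, ne_comm, Ne, exp_eq_one_iff, neg_eq_zero]
    exact hx
  have hfactor : exp x - 1 = exp x * (1 - exp (-x)) := by
    rw [mul_sub, mul_one, ← exp_add, add_neg_cancel, exp_zero]
  rw [hfactor, log_mul (exp_ne_zero x) h1, log_exp]

lemma hasDerivAt_barrierCorrection (n : ℝ) {L t : ℝ} (hL : L ≠ 0) (ht : t ≠ 0) :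
    HasDerivAt (barrierCorrection n L) (n * exp (L * t) * log (1 - exp (-(L * t)))) t := by
  have hLt : L * t ≠ 0 := mul_ne_zero hL ht
  have hE : exp (L * t) - 1 ≠ 0 := sub_ne_zero.mpr (by simpa using hLt)
  have hexp : HasDerivAt (fun s => exp (L * s)) (exp (L * t) * L) t :=
    ((hasDerivAt_id t).const_mul L).exp.congr_deriv (by simp)
  have h := (((hexp.sub_const 1).const_mul (n / L)).mul ((hexp.sub_const 1).log hE)).sub
    (((hasDerivAt_id t).const_mul n).mul hexp)
  refine h.congr_deriv ?_
  simp only [id, log_exp_sub_one hLt]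
  field_simp
  ring

lemma hasDerivAt_exp_neg_mul (c t : ℝ) :
    HasDerivAt (fun s => exp (-(c * s))) (-(c * exp (-(c * t)))) t :=
  ((hasDerivAt_id t).const_mul c).neg.exp.congr_deriv (by simp; ring)

lemma hasDerivAt_barrierCorrection_mul_exp (n : ℝ) {L t : ℝ} (hL : L ≠ 0) (ht : t ≠ 0) :
    HasDerivAt (fun s => barrierCorrection n L s * exp (-(L * s)))
      (n * log (1 - exp (-(L * t))) - L * (barrierCorrection n L t * exp (-(L * t)))) t := by
  refine ((hasDerivAt_barrierCorrection n hL ht).mul (hasDerivAt_exp_neg_mul L t)).congr_deriv ?_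
  have hEu : exp (L * t) * exp (-(L * t)) = 1 := by rw [← exp_add, add_neg_cancel, exp_zero]
  linear_combination n * log (1 - exp (-(L * t))) * hEu

lemma barrierCorrection_nonpos {n L t : ℝ} (hn : 0 ≤ n) (hL : 0 < L) (ht : 0 < t) :
    barrierCorrection n L t ≤ 0 := by
  have hLt : 0 < L * t := mul_pos hL ht
  have hE : 0 < exp (L * t) - 1 := by linarith [add_one_lt_exp hLt.ne']
  have hlog : log (exp (L * t) - 1) ≤ L * t := by
    simpa using log_le_log hE (sub_le_self _ zero_le_one)
  have hcoef : 0 ≤ n / L * (exp (L * t) - 1) := by positivity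
  calc barrierCorrection n L t
      ≤ n / L * (exp (L * t) - 1) * (L * t) - n * t * exp (L * t) := by
        unfold barrierCorrection; gcongr
    _ = -(n * t) := by field_simp; ring
    _ ≤ 0 := neg_nonpos.mpr (mul_nonneg hn ht.le)

lemma le_add_of_increment_bounds {F : ℝ → ℝ} {L κ : ℝ} (hLκ : L ≤ κ)
    (hF : ∀ a b : ℝ, a ≤ b → L * (b - a) ≤ F b - F a ∧ F b - F a ≤ κ * (b - a))
    (y : ℝ) {p q : ℝ} (hp : p ≤ 0) (hq : q ≤ 0) :
    F (y + p - q) ≤ F y + L * p - κ * q := by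
  rcases le_total (y + p - q) y with h | h
  · have := (hF _ _ h).1
    nlinarith
  · have := (hF _ _ h).2
    nlinarith

theorem stmt_8_general (n L κ : ℝ) (hn : 0 < n) (hL : 0 < L) (hLκ : L ≤ κ)
    (F : ℝ → ℝ)
    (hF : ∀ a b : ℝ, a ≤ b → L * (b - a) ≤ F b - F a ∧ F b - F a ≤ κ * (b - a))
    (ψ ψ' : ℝ) (hψ : ψ ≤ 0) (hψ' : ψ' ≤ 0) :
    ∀ t : ℝ, 0 < t → ∃ d : ℝ,
      HasDerivAt
        (fun s : ℝ => exp (-(L * s)) * ψ + (1 - exp (-(κ * s))) * ψ' +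
          ((n / L) * (exp (L * s) - 1) * log (exp (L * s) - 1) - n * s * exp (L * s))
            * exp (-(L * s))) d t ∧
      d + F (exp (-(L * t)) * ψ + (1 - exp (-(κ * t))) * ψ' +
          ((n / L) * (exp (L * t) - 1) * log (exp (L * t) - 1) - n * t * exp (L * t))
            * exp (-(L * t)))
        ≤ F ψ' + n * log (1 - exp (-(L * t))) := by
  intro t ht
  set u := exp (-(L * t))
  set v := exp (-(κ * t))
  set Φ := barrierCorrection n L t
  have hW : HasDerivAt _ (-(L * (u * (ψ + Φ))) + κ * (v * ψ') + n * log (1 - u)) t :=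
    (((hasDerivAt_exp_neg_mul L t).mul_const ψ).add
      (((hasDerivAt_exp_neg_mul κ t).const_sub 1).mul_const ψ')).add
      (hasDerivAt_barrierCorrection_mul_exp n hL.ne' ht.ne') |>.congr_deriv (by ring)
  refine ⟨_, hW, ?_⟩
  have hp : u * (ψ + Φ) ≤ 0 :=
    mul_nonpos_of_nonneg_of_nonpos (exp_pos _).le
      (add_nonpos hψ (barrierCorrection_nonpos hn.le hL ht))
  have hq : v * ψ' ≤ 0 := mul_nonpos_of_nonneg_of_nonpos (exp_pos _).le hψ'
  have hF_W := le_add_of_increment_bounds hLκ hF ψ' hp hq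
  have hW_eq : u * ψ + (1 - v) * ψ' + Φ * u = ψ' + u * (ψ + Φ) - v * ψ' := by ring
  change _ + F (u * ψ + (1 - v) * ψ' + Φ * u) ≤ _
  rw [hW_eq]
  linarith

/-- the subsolution-barrier differential inequality from the
proof of the paper's Theorem 3.10. Let `n > 0`, `0 < L ≤ κ`, let `F : ℝ → ℝ`
be nondecreasing with `L(b-a) ≤ F b - F a ≤ κ(b-a)` for `a ≤ b`, and let
`ψ ≤ 0`, `ψ∞ ≤ 0`. With `Φ(t) = (n/L)(e^{Lt}-1)log(e^{Lt}-1) - n t e^{Lt}` and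
`W(t) = e^{-Lt}ψ + (1-e^{-κt})ψ∞ + Φ(t)e^{-Lt}`, the function `W` is
differentiable on `(0,∞)` and `W'(t) + F(W(t)) ≤ F(ψ∞) + n log(1-e^{-Lt})`
for every `t > 0`. -/
theorem stmt_8 (n L κ : ℝ) (hn : 0 < n) (hL : 0 < L) (hLκ : L ≤ κ)
    (F : ℝ → ℝ) (hF_mono : Monotone F)
    (hF : ∀ a b : ℝ, a ≤ b → L * (b - a) ≤ F b - F a ∧ F b - F a ≤ κ * (b - a))
    (ψ ψ' : ℝ) (hψ : ψ ≤ 0) (hψ' : ψ' ≤ 0) :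
    ∀ t : ℝ, 0 < t → ∃ d : ℝ,
      HasDerivAt
        (fun s : ℝ => exp (-(L * s)) * ψ + (1 - exp (-(κ * s))) * ψ' +
          ((n / L) * (exp (L * s) - 1) * log (exp (L * s) - 1) - n * s * exp (L * s))
            * exp (-(L * s))) d t ∧
      d + F (exp (-(L * t)) * ψ + (1 - exp (-(κ * t))) * ψ' +
          ((n / L) * (exp (L * t) - 1) * log (exp (L * t) - 1) - n * t * exp (L * t))
            * exp (-(L * t)))
        ≤ F ψ' + n * log (1 - exp (-(L * t))) :=
  stmt_8_general n L κ hn hL hLκ F hF ψ ψ' hψ hψ'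
end

section
/- Let n > 0 and M ≥ 0 be real numbers, set c = n/(1 + M), let F : ℝ → ℝ be nondecreasing, and let ψ_∞ ∈ [−M, 0] be a real number. Define V : (0,∞) → ℝ by V(t) = (1 − e^{−ct})ψ_∞ + e^{−ct}. Then V is differentiable on (0,∞) and for every t > 0: V'(t) + F(V(t)) ≥ F(ψ_∞) + n·log(1 − e^{−ct}). -/
/-!
With `e = e^{-ct} ∈ (0,1)` one has `V' = c e (ψ∞ - 1)` and `V - ψ∞ = e (1 - ψ∞) ≥ 0`, so
monotonicity of `F` gives `F(V) ≥ F(ψ∞)`. The logarithm is absorbed by `log (1 - e) ≤ -e`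
together with `c (1 - ψ∞) ≤ c (1 + M) = n`.
-/

open Real

theorem hasDerivAt_one_sub_exp_mul_add_exp (c a t : ℝ) :
    HasDerivAt (fun s : ℝ => (1 - exp (-(c * s))) * a + exp (-(c * s)))
      (c * exp (-(c * t)) * (a - 1)) t := by
  have hexp : HasDerivAt (fun s : ℝ => exp (-(c * s))) (-c * exp (-(c * t))) t := by
    simpa [mul_comm] using (((hasDerivAt_id t).const_mul c).neg).exp
  exact (((hexp.const_sub 1).mul_const a).add hexp).congr_deriv (by ring)

theorem le_one_sub_mul_add {a e : ℝ} (ha : a ≤ 1) (he : 0 ≤ e) : a ≤ (1 - e) * a + e := by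
  nlinarith

theorem mul_log_one_sub_le {n c a e : ℝ} (hn : 0 ≤ n) (he₀ : 0 ≤ e) (he₁ : e < 1)
    (hca : c * (1 - a) ≤ n) : n * log (1 - e) ≤ c * e * (a - 1) :=
  calc n * log (1 - e) ≤ n * (-e) := by
        gcongr
        linarith [log_le_sub_one_of_pos (sub_pos.mpr he₁)]
    _ ≤ c * e * (a - 1) := by nlinarith

theorem stmt_9_general (n M : ℝ) (hn : 0 < n)
    (F : ℝ → ℝ) (hF_mono : Monotone F)
    (ψ' : ℝ) (hψ' : ψ' ∈ Set.Icc (-M) 0) :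
    ∀ t : ℝ, 0 < t → ∃ d : ℝ,
      HasDerivAt
        (fun s : ℝ => (1 - exp (-(n / (1 + M) * s))) * ψ' + exp (-(n / (1 + M) * s))) d t ∧
      F ψ' + n * log (1 - exp (-(n / (1 + M) * t)))
        ≤ d + F ((1 - exp (-(n / (1 + M) * t))) * ψ' + exp (-(n / (1 + M) * t))) := by
  intro t ht
  obtain ⟨hψM, hψ0⟩ := hψ'
  set c := n / (1 + M)
  have h1M : 0 < 1 + M := by linarith
  have hc : 0 < c := div_pos hn h1M
  have hcψ : c * (1 - ψ') ≤ n :=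
    calc c * (1 - ψ') ≤ c * (1 + M) := by gcongr; linarith
      _ = n := div_mul_cancel₀ n h1M.ne'
  have he₁ : exp (-(c * t)) < 1 := exp_lt_one_iff.mpr (by nlinarith)
  refine ⟨_, hasDerivAt_one_sub_exp_mul_add_exp c ψ' t, ?_⟩
  have hF := hF_mono (le_one_sub_mul_add (a := ψ') (by linarith) (exp_pos (-(c * t))).le)
  linarith [mul_log_one_sub_le hn.le (exp_pos (-(c * t))).le he₁ hcψ]

/-- the supersolution-barrier differential inequality from
the proof of the paper's Theorem 3.10. Let `n > 0`, `M ≥ 0`, `c = n/(1+M)`,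
let `F : ℝ → ℝ` be nondecreasing and `ψ∞ ∈ [-M, 0]`. With
`V(t) = (1-e^{-ct})ψ∞ + e^{-ct}`, the function `V` is differentiable on
`(0,∞)` and `V'(t) + F(V(t)) ≥ F(ψ∞) + n log(1-e^{-ct})` for every `t > 0`. -/
theorem stmt_9 (n M : ℝ) (hn : 0 < n) (hM : 0 ≤ M)
    (F : ℝ → ℝ) (hF_mono : Monotone F)
    (ψ' : ℝ) (hψ' : ψ' ∈ Set.Icc (-M) 0) :
    ∀ t : ℝ, 0 < t → ∃ d : ℝ,
      HasDerivAt
        (fun s : ℝ => (1 - exp (-(n / (1 + M) * s))) * ψ' + exp (-(n / (1 + M) * s))) d t ∧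
      F ψ' + n * log (1 - exp (-(n / (1 + M) * t)))
        ≤ d + F ((1 - exp (-(n / (1 + M) * t))) * ψ' + exp (-(n / (1 + M) * t))) :=
  stmt_9_general n M hn F hF_mono ψ' hψ'
end

section
/- Let T > 0, let u : (0,T) → ℝ be bounded and locally Lipschitz (Lipschitz on every compact subinterval of (0,T)), let ε ∈ (0,1/4), and let η : ℝ → ℝ be a continuously differentiable function with support contained in [−ε, ε]. Define Φ : (0, T/(1+ε)) → ℝ by Φ(t) = ∫_ℝ s^{−1} u(st) η(s−1) ds. Then Φ is differentiable on (0, T/(1+ε)) with Φ'(t) = −t^{−1} ∫_ℝ u(st) η'(s−1) ds, and Φ' is Lipschitz on every compact subinterval of (0, T/(1+ε)); more precisely, for every compact interval J ⊂ (0, T/(1+ε)), if u is κ-Lipschitz on the interval {st : s ∈ [1−ε,1+ε], t ∈ J}, then for all t₁, t₂ ∈ J one has |Φ'(t₁) − Φ'(t₂)| ≤ (2κ/t₁ + (sup_{(0,T)}|u|)/(t₁ t₂)) · (∫_ℝ |η'(s−1)| ds) · |t₁ − t₂|. -/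
/-!
The substitution `r = s t` moves the dependence on `t` from `u` to the mollifier:
`Φ(t) = ∫ r⁻¹ u(r) η(r/t - 1) dr`. For `t` near a given point the integrand vanishes off a fixed
compact subset of `(0, T)`, on which `u` is continuous, and `η` is `C¹`, so `Φ` may be
differentiated under the integral sign; substituting back gives the formula for `Φ'`.
Writing `A(t) = ∫ u(st) η'(s-1) ds`, one has
`Φ'(t₁) - Φ'(t₂) = t₁⁻¹ (A(t₂) - A(t₁)) + (t₁ - t₂)/(t₁ t₂) · A(t₂)`; the first term is controlled by
the Lipschitz bound on `u` (with `s ≤ 2` on the support of `η'(s-1)`), the second by `|u| ≤ M`.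
-/

open Set Filter MeasureTheory
open scoped Pointwise Topology

theorem continuousOn_of_forall_isCompact_abs_sub_le_mul {u : ℝ → ℝ} {U : Set ℝ} (hU : IsOpen U)
    (hu : ∀ K ⊆ U, IsCompact K → ∃ κ : ℝ, ∀ x ∈ K, ∀ y ∈ K, |u x - u y| ≤ κ * |x - y|) :
    ContinuousOn u U := by
  intro x hx
  obtain ⟨δ, hδ, hball⟩ := Metric.nhds_basis_closedBall.mem_iff.1 (hU.mem_nhds hx)
  obtain ⟨κ, hκ⟩ := hu _ hball (isCompact_closedBall x δ)
  have hlip : LipschitzOnWith κ.toNNReal u (Metric.closedBall x δ) :=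
    .of_dist_le_mul fun y hy z hz =>
      (hκ y hy z hz).trans (mul_le_mul_of_nonneg_right κ.le_coe_toNNReal (abs_nonneg _))
  exact (hlip.continuousOn.continuousAt (Metric.closedBall_mem_nhds x hδ)).continuousWithinAt

theorem integral_mul_comp_mul_right {t : ℝ} (ht : 0 < t) (φ g : ℝ → ℝ) :
    ∫ s, φ (s * t) * g s = t⁻¹ * ∫ r, φ r * g (r / t) := by
  simpa [abs_of_pos ht, mul_div_cancel_right₀ _ ht.ne'] using
    Measure.integral_comp_mul_right (fun r => φ r * g (r / t)) t

theorem integrable_mul_of_continuousOn_of_eq_zero {K : Set ℝ} (hK : IsCompact K) {f g : ℝ → ℝ}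
    (hf : ContinuousOn f K) (hg : Continuous g) (hg0 : ∀ x ∉ K, g x = 0) :
    Integrable (fun x => f x * g x) :=
  ((hf.mul hg.continuousOn).integrableOn_compact hK).integrable_of_forall_notMem_eq_zero
    fun x hx => by simp [hg0 x hx]

theorem abs_integral_mul_le {φ h : ℝ → ℝ} {c : ℝ} (hh : Integrable h)
    (hφ : ∀ s, h s ≠ 0 → |φ s| ≤ c) :
    |∫ s, φ s * h s| ≤ c * ∫ s, |h s| := by
  refine (norm_integral_le_of_norm_le (f := fun s => φ s * h s) (hh.abs.const_mul c)
    (.of_forall fun s => ?_)).trans_eq (integral_const_mul c _)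
  rw [Real.norm_eq_abs, abs_mul]
  by_cases hs : h s = 0
  · simp [hs]
  · exact mul_le_mul_of_nonneg_right (hφ s hs) (abs_nonneg _)

theorem hasDerivAt_const_div_id (r : ℝ) {τ : ℝ} (hτ : τ ≠ 0) :
    HasDerivAt (fun τ => r / τ) (-r / τ ^ 2) τ := by
  simpa only [div_eq_mul_inv, neg_mul, mul_neg] using (hasDerivAt_inv hτ).const_mul r

theorem hasDerivAt_setIntegral_mul_comp_div {K : Set ℝ} (hK : IsCompact K) {f g : ℝ → ℝ}
    (hf : IntegrableOn f K) (hg : ContDiff ℝ 1 g) {t : ℝ} (ht : t ≠ 0) :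
    HasDerivAt (fun τ => ∫ r in K, f r * g (r / τ))
      (∫ r in K, f r * (deriv g (r / t) * (-r / t ^ 2))) t := by
  set δ := |t| / 2
  have hδ : 0 < δ := half_pos (abs_pos.2 ht)
  have hδt : δ < |t| := half_lt_self (abs_pos.2 ht)
  have hne : ∀ τ ∈ Metric.closedBall t δ, τ ≠ 0 := by
    rintro τ hτ rfl
    rw [Metric.mem_closedBall, dist_comm, Real.dist_eq, sub_zero] at hτ
    linarith
  have hg' : Continuous (deriv g) := hg.continuous_deriv le_rfl
  have hcont : ContinuousOn (fun p : ℝ × ℝ => deriv g (p.2 / p.1) * (-p.2 / p.1 ^ 2))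
      (Metric.closedBall t δ ×ˢ K) :=
    (hg'.comp_continuousOn (continuousOn_snd.div continuousOn_fst fun p hp => hne _ hp.1)).mul
      (continuousOn_snd.neg.div (continuousOn_fst.pow 2) fun p hp => pow_ne_zero 2 (hne _ hp.1))
  obtain ⟨C, hC⟩ := ((isCompact_closedBall t δ).prod hK).exists_bound_of_continuousOn hcont
  have hderiv : ∀ r, ∀ τ ≠ 0, HasDerivAt (fun τ => f r * g (r / τ))
      (f r * (deriv g (r / τ) * (-r / τ ^ 2))) τ := fun r τ hτ =>
    (((hg.differentiable one_ne_zero) _).hasDerivAt.comp τ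
      (hasDerivAt_const_div_id r hτ)).const_mul (f r)
  refine (hasDerivAt_integral_of_dominated_loc_of_deriv_le (bound := fun r => ‖f r‖ * C)
    (Metric.ball_mem_nhds t hδ)
    (.of_forall fun τ => hf.aestronglyMeasurable.mul
      (hg.continuous.comp (continuous_id.div_const τ)).aestronglyMeasurable)
    (hf.mul_continuousOn (hg.continuous.comp (continuous_id.div_const t)).continuousOn hK)
    (hf.aestronglyMeasurable.mul
      ((hg'.comp (continuous_id.div_const t)).mul (continuous_neg.div_const _)).aestronglyMeasurable)
    ((ae_restrict_iff' hK.measurableSet).2 (.of_forall fun r hr τ hτ => ?_))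
    (hf.norm.mul_const C)
    (.of_forall fun r τ hτ => hderiv r τ (hne τ (Metric.ball_subset_closedBall hτ)))).2
  rw [norm_mul]
  exact mul_le_mul_of_nonneg_left (hC (τ, r) ⟨Metric.ball_subset_closedBall hτ, hr⟩) (norm_nonneg _)

theorem mem_Icc_of_comp_sub_one_ne_zero {h : ℝ → ℝ} {ε s : ℝ}
    (hh : Function.support h ⊆ Icc (-ε) ε) (hs : h (s - 1) ≠ 0) :
    s ∈ Icc (1 - ε) (1 + ε) := by
  obtain ⟨h₁, h₂⟩ := hh hs
  constructor <;> linarith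

theorem mul_mem_Ioo_of_mem_Icc {T ε s t : ℝ} (hε : ε < 1) (hs : s ∈ Icc (1 - ε) (1 + ε))
    (ht : t ∈ Ioo 0 (T / (1 + ε))) : s * t ∈ Ioo 0 T := by
  obtain ⟨hs₁, hs₂⟩ := hs
  obtain ⟨ht₀, htT⟩ := ht
  have h1ε : 0 < 1 + ε := by linarith
  rw [lt_div_iff₀ h1ε] at htT
  constructor <;> nlinarith

theorem abs_comp_mul_sub_comp_mul_le {u : ℝ → ℝ} {S : Set ℝ} {κ s t₁ t₂ : ℝ}
    (hκ : ∀ x ∈ S, ∀ y ∈ S, |u x - u y| ≤ κ * |x - y|) (hs₀ : 0 < s) (hs₂ : s ≤ 2)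
    (h₁ : s * t₁ ∈ S) (h₂ : s * t₂ ∈ S) :
    |u (s * t₁) - u (s * t₂)| ≤ 2 * κ * |t₁ - t₂| := by
  have h := hκ _ h₁ _ h₂
  rw [← mul_sub, abs_mul, abs_of_pos hs₀] at h
  nlinarith [abs_nonneg (u (s * t₁) - u (s * t₂)), abs_nonneg (t₁ - t₂)]

theorem abs_neg_inv_mul_sub_neg_inv_mul_le {t₁ t₂ A₁ A₂ L M I : ℝ} (ht₁ : 0 < t₁) (ht₂ : 0 < t₂)
    (hA : |A₁ - A₂| ≤ L * |t₁ - t₂| * I) (hA₂ : |A₂| ≤ M * I) :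
    |-(t₁⁻¹ * A₁) - -(t₂⁻¹ * A₂)| ≤ (L / t₁ + M / (t₁ * t₂)) * I * |t₁ - t₂| := by
  have hsplit : -(t₁⁻¹ * A₁) - -(t₂⁻¹ * A₂) = t₁⁻¹ * (A₂ - A₁) + (t₁ - t₂) / (t₁ * t₂) * A₂ := by
    field_simp
    ring
  calc |-(t₁⁻¹ * A₁) - -(t₂⁻¹ * A₂)|
      ≤ t₁⁻¹ * |A₁ - A₂| + |t₁ - t₂| / (t₁ * t₂) * |A₂| := by
        rw [hsplit, abs_sub_comm A₁]
        refine (abs_add_le _ _).trans_eq ?_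
        rw [abs_mul, abs_mul, abs_div, abs_of_pos (inv_pos.2 ht₁), abs_of_pos (mul_pos ht₁ ht₂)]
    _ ≤ t₁⁻¹ * (L * |t₁ - t₂| * I) + |t₁ - t₂| / (t₁ * t₂) * (M * I) := by gcongr
    _ = (L / t₁ + M / (t₁ * t₂)) * I * |t₁ - t₂| := by ring

theorem hasDerivAt_integral_inv_mul_comp_mul {T ε t : ℝ} {u η : ℝ → ℝ}
    (hu : ContinuousOn u (Ioo 0 T)) (hε : ε < 1) (hη : ContDiff ℝ 1 η)
    (hη_supp : tsupport η ⊆ Icc (-ε) ε) (ht : t ∈ Ioo 0 (T / (1 + ε))) :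
    HasDerivAt (fun τ : ℝ => ∫ s : ℝ, s⁻¹ * u (s * τ) * η (s - 1))
      (-(t⁻¹ * ∫ s : ℝ, u (s * t) * deriv η (s - 1))) t := by
  obtain ⟨ht₀, htT⟩ := ht
  obtain ⟨b, htb, hbT⟩ := exists_between htT
  set K := Icc (1 - ε) (1 + ε) * Icc (t / 2) b
  have hK : IsCompact K := isCompact_Icc.mul isCompact_Icc
  have hKT : K ⊆ Ioo 0 T := by
    rintro _ ⟨s, hs, τ, hτ, rfl⟩
    exact mul_mem_Ioo_of_mem_Icc hε hs ⟨by linarith [hτ.1], hτ.2.trans_lt hbT⟩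
  have hvanish : ∀ {h : ℝ → ℝ}, Function.support h ⊆ Icc (-ε) ε →
      ∀ τ ∈ Icc (t / 2) b, ∀ r ∉ K, h (r / τ - 1) = 0 := by
    intro h hh τ hτ r hr
    by_contra hne
    have hτ₀ : τ ≠ 0 := by linarith [hτ.1]
    exact hr ⟨r / τ, mem_Icc_of_comp_sub_one_ne_zero hh hne, τ, hτ, div_mul_cancel₀ r hτ₀⟩
  have hf : IntegrableOn (fun r => r⁻¹ * u r) K :=
    ((continuousOn_inv₀.mono fun r hr => (hKT hr).1.ne').mul (hu.mono hKT)).integrableOn_compact hK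
  have hlocal : (fun τ => ∫ s, s⁻¹ * u (s * τ) * η (s - 1)) =ᶠ[𝓝 t]
      fun τ => ∫ r in K, r⁻¹ * u r * η (r / τ - 1) := by
    filter_upwards [Ioo_mem_nhds (half_lt_self ht₀) htb] with τ hτ
    have hτ₀ : 0 < τ := by linarith [hτ.1]
    rw [setIntegral_eq_integral_of_forall_compl_eq_zero fun r hr => by
      rw [hvanish ((subset_tsupport η).trans hη_supp) τ (Ioo_subset_Icc_self hτ) r hr, mul_zero]]
    calc ∫ s, s⁻¹ * u (s * τ) * η (s - 1)
        = ∫ s, τ * ((s * τ)⁻¹ * u (s * τ) * η (s - 1)) := by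
          congr 1 with s
          rw [mul_inv]
          field_simp
      _ = ∫ r, r⁻¹ * u r * η (r / τ - 1) := by
          rw [integral_const_mul, integral_mul_comp_mul_right hτ₀ (fun r => r⁻¹ * u r),
            mul_inv_cancel_left₀ hτ₀.ne']
  refine ((hasDerivAt_setIntegral_mul_comp_div hK hf (hη.comp (contDiff_id.sub contDiff_const))
    ht₀.ne').congr_of_eventuallyEq hlocal).congr_deriv ?_
  have hderiv_vanish : ∀ r ∉ K, u r * deriv η (r / t - 1) = 0 := fun r hr => by
    rw [hvanish (support_deriv_subset.trans hη_supp) t ⟨(half_lt_self ht₀).le, htb.le⟩ r hr,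
      mul_zero]
  calc ∫ r in K, r⁻¹ * u r * (deriv (fun x => η (x - 1)) (r / t) * (-r / t ^ 2))
      = ∫ r in K, -(t⁻¹ * t⁻¹) * (u r * deriv η (r / t - 1)) := by
        refine setIntegral_congr_fun hK.measurableSet fun r hr => ?_
        have hr₀ : r ≠ 0 := (hKT hr).1.ne'
        rw [deriv_comp_sub_const]
        field_simp
    _ = -(t⁻¹ * ∫ s, u (s * t) * deriv η (s - 1)) := by
        rw [integral_const_mul, setIntegral_eq_integral_of_forall_compl_eq_zero hderiv_vanish,
          integral_mul_comp_mul_right ht₀]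
        ring

theorem stmt_12_general (T : ℝ) (u : ℝ → ℝ) (M : ℝ)
    (hu_bdd : ∀ t ∈ Ioo 0 T, |u t| ≤ M)
    (hu_lip : ∀ K : Set ℝ, K ⊆ Ioo 0 T → IsCompact K →
      ∃ κ : ℝ, ∀ x ∈ K, ∀ y ∈ K, |u x - u y| ≤ κ * |x - y|)
    (ε : ℝ) (hε : ε ∈ Ioo (0 : ℝ) (1 / 4))
    (η : ℝ → ℝ) (hη : ContDiff ℝ 1 η) (hη_supp : tsupport η ⊆ Icc (-ε) ε) :
    (∀ t ∈ Ioo 0 (T / (1 + ε)),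
      HasDerivAt (fun τ : ℝ => ∫ s : ℝ, s⁻¹ * u (s * τ) * η (s - 1))
        (-(t⁻¹ * ∫ s : ℝ, u (s * t) * deriv η (s - 1))) t) ∧
    (∀ a b : ℝ, Icc a b ⊆ Ioo 0 (T / (1 + ε)) →
      ∀ κ : ℝ,
        (∀ x ∈ image2 (· * ·) (Icc (1 - ε) (1 + ε)) (Icc a b),
         ∀ y ∈ image2 (· * ·) (Icc (1 - ε) (1 + ε)) (Icc a b),
          |u x - u y| ≤ κ * |x - y|) →
        ∀ t₁ ∈ Icc a b, ∀ t₂ ∈ Icc a b,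
          |(-(t₁⁻¹ * ∫ s : ℝ, u (s * t₁) * deriv η (s - 1))) -
              (-(t₂⁻¹ * ∫ s : ℝ, u (s * t₂) * deriv η (s - 1)))|
            ≤ (2 * κ / t₁ + M / (t₁ * t₂)) * (∫ s : ℝ, |deriv η (s - 1)|) * |t₁ - t₂|) := by
  have hε₁ : ε < 1 := by linarith [hε.2]
  have hu := continuousOn_of_forall_isCompact_abs_sub_le_mul isOpen_Ioo hu_lip
  refine ⟨fun t ht => hasDerivAt_integral_inv_mul_comp_mul hu hε₁ hη hη_supp ht, ?_⟩
  intro a b hab κ hκ t₁ ht₁ t₂ ht₂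
  have hη'_supp : Function.support (deriv η) ⊆ Icc (-ε) ε := support_deriv_subset.trans hη_supp
  have hη' : Continuous (deriv η) := hη.continuous_deriv le_rfl
  have hJ : ∀ s, deriv η (s - 1) ≠ 0 → s ∈ Icc (1 - ε) (1 + ε) := fun s =>
    mem_Icc_of_comp_sub_one_ne_zero hη'_supp
  have hI : Integrable (fun s => deriv η (s - 1)) :=
    (hη'.integrable_of_hasCompactSupport (HasCompactSupport.intro isCompact_Icc fun x hx =>
      Function.notMem_support.1 fun h => hx (hη'_supp h))).comp_sub_right 1
  have hint : ∀ t ∈ Icc a b, Integrable (fun s => u (s * t) * deriv η (s - 1)) := fun t ht =>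
    integrable_mul_of_continuousOn_of_eq_zero isCompact_Icc
      (hu.comp (continuousOn_id.mul continuousOn_const) fun s hs =>
        mul_mem_Ioo_of_mem_Icc hε₁ hs (hab ht))
      (hη'.comp (continuous_sub_right 1)) fun s hs => not_imp_comm.1 (hJ s) hs
  refine abs_neg_inv_mul_sub_neg_inv_mul_le (hab ht₁).1 (hab ht₂).1 ?_ ?_
  · rw [← integral_sub (hint t₁ ht₁) (hint t₂ ht₂)]
    simp_rw [← sub_mul]
    exact abs_integral_mul_le hI fun s hs => abs_comp_mul_sub_comp_mul_le hκ
      (by linarith [(hJ s hs).1]) (by linarith [(hJ s hs).2, hε.2])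
      (mem_image2_of_mem (hJ s hs) ht₁) (mem_image2_of_mem (hJ s hs) ht₂)
  · exact abs_integral_mul_le hI fun s hs =>
      hu_bdd _ (mul_mem_Ioo_of_mem_Icc hε₁ (hJ s hs) (hab ht₂))

/-- the time-mollification estimate from the proof of the
paper's Theorem 3.8, one-variable content. Let `T > 0`, `u : (0,T) → ℝ`
bounded (by `M`) and Lipschitz on every compact subinterval of `(0,T)`, let
`ε ∈ (0,1/4)` and let `η` be `C¹` with support in `[-ε,ε]`. Define
`Φ(t) = ∫ s⁻¹ u(st) η(s-1) ds` on `(0, T/(1+ε))`. Then `Φ` is differentiable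
with `Φ'(t) = -t⁻¹ ∫ u(st) η'(s-1) ds`, and for any compact interval
`J = [a,b] ⊂ (0, T/(1+ε))`, if `u` is `κ`-Lipschitz on
`{s t : s ∈ [1-ε,1+ε], t ∈ J}` then for all `t₁, t₂ ∈ J`,
`|Φ'(t₁) - Φ'(t₂)| ≤ (2κ/t₁ + M/(t₁ t₂)) (∫ |η'(s-1)| ds) |t₁ - t₂|`. -/
theorem stmt_12 (T : ℝ) (hT : 0 < T) (u : ℝ → ℝ) (M : ℝ)
    (hu_bdd : ∀ t ∈ Ioo 0 T, |u t| ≤ M)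
    (hu_lip : ∀ K : Set ℝ, K ⊆ Ioo 0 T → IsCompact K →
      ∃ κ : ℝ, ∀ x ∈ K, ∀ y ∈ K, |u x - u y| ≤ κ * |x - y|)
    (ε : ℝ) (hε : ε ∈ Ioo (0 : ℝ) (1 / 4))
    (η : ℝ → ℝ) (hη : ContDiff ℝ 1 η) (hη_supp : tsupport η ⊆ Icc (-ε) ε) :
    (∀ t ∈ Ioo 0 (T / (1 + ε)),
      HasDerivAt (fun τ : ℝ => ∫ s : ℝ, s⁻¹ * u (s * τ) * η (s - 1))
        (-(t⁻¹ * ∫ s : ℝ, u (s * t) * deriv η (s - 1))) t) ∧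
    (∀ a b : ℝ, Icc a b ⊆ Ioo 0 (T / (1 + ε)) →
      ∀ κ : ℝ,
        (∀ x ∈ image2 (· * ·) (Icc (1 - ε) (1 + ε)) (Icc a b),
         ∀ y ∈ image2 (· * ·) (Icc (1 - ε) (1 + ε)) (Icc a b),
          |u x - u y| ≤ κ * |x - y|) →
        ∀ t₁ ∈ Icc a b, ∀ t₂ ∈ Icc a b,
          |(-(t₁⁻¹ * ∫ s : ℝ, u (s * t₁) * deriv η (s - 1))) -
              (-(t₂⁻¹ * ∫ s : ℝ, u (s * t₂) * deriv η (s - 1)))|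
            ≤ (2 * κ / t₁ + M / (t₁ * t₂)) * (∫ s : ℝ, |deriv η (s - 1)|) * |t₁ - t₂|) :=
  stmt_12_general T u M hu_bdd hu_lip ε hε η hη hη_supp
end
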